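/- Let a : [0,∞) → ℝ be continuous, nonnegative, and integrable with ∫₀^∞ a(t) dt = ‖a‖_{L¹} < ∞. Let λ > 0, s ≥ 0, and let y₁ solve y₁'' + a(t) y₁' − λ² y₁ = 0 on [s,∞) with y₁(s) = 1, y₁'(s) = 0. Then cosh(λ(t−s)) ≥ y₁(t) ≥ e^{−‖a‖_{L¹}} cosh(λ(t−s)) for all t ≥ s. -/

import Mathlib

open Set Real MeasureTheory intervalIntegral

/-! With `A` a primitive of `a`, the equation reads `(e^A y')' = λ² e^A y`, and the energy
`λ² y² - y'²` is nondecreasing; hence `y² ≥ 1`, so `y ≥ 1` by continuity, and then `y' ≥ 0`.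
The functions `(λ y + y') e^(A - λ t)`, `(λ y - y') e^(λ t)` and
`λ y sinh (λ (t - s)) - y' cosh (λ (t - s))` have derivatives `λ a y e^(A - λ t)`, `a y' e^(λ t)`
and `a y' cosh (λ (t - s))`, all nonnegative. The first two give
`λ y + y' ≥ λ e^(λ (t - s) - (A t - A s))` and `λ y - y' ≥ λ e^(-λ (t - s))`, whose sum is the
lower bound since `A t - A s ≤ ‖a‖₁`; the third is minus the numerator of
`(y / cosh (λ (t - s)))'`, so this quotient decreases from its value `1` at `s`. -/

section Calculus

variable {f f' : ℝ → ℝ} {s : ℝ}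

lemma monotoneOn_Ici_of_hasDerivAt_nonneg (hf : ∀ t ∈ Ici s, HasDerivAt f (f' t) t)
    (hf' : ∀ t ∈ Ici s, 0 ≤ f' t) : MonotoneOn f (Ici s) :=
  monotoneOn_of_hasDerivWithinAt_nonneg (convex_Ici s)
    (fun t ht => (hf t ht).continuousAt.continuousWithinAt)
    (fun t ht => (hf t (interior_subset ht)).hasDerivWithinAt)
    (fun t ht => hf' t (interior_subset ht))

lemma antitoneOn_Ici_of_hasDerivAt_nonpos (hf : ∀ t ∈ Ici s, HasDerivAt f (f' t) t)
    (hf' : ∀ t ∈ Ici s, f' t ≤ 0) : AntitoneOn f (Ici s) :=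
  antitoneOn_of_hasDerivWithinAt_nonpos (convex_Ici s)
    (fun t ht => (hf t ht).continuousAt.continuousWithinAt)
    (fun t ht => (hf t (interior_subset ht)).hasDerivWithinAt)
    (fun t ht => hf' t (interior_subset ht))

end Calculus

lemma exists_primitive_sub_le_integral {a : ℝ → ℝ} (ha : ContinuousOn a (Ici 0))
    (ha0 : ∀ t ∈ Ici (0:ℝ), 0 ≤ a t) (haL1 : IntegrableOn a (Ici 0)) {s : ℝ} (hs : 0 ≤ s) :
    ∃ A : ℝ → ℝ, (∀ t ∈ Ici s, HasDerivAt A (a t) t) ∧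
      ∀ t ∈ Ici s, A t - A s ≤ ∫ r in Ici 0, a r := by
  -- extending `a` constantly to the left makes the primitive differentiable at `s = 0` too
  set b : ℝ → ℝ := fun r => a (max r 0)
  have hb : Continuous b :=
    ha.comp_continuous (continuous_id.max continuous_const) fun r => le_max_right r 0
  have hba : ∀ r ∈ Ici s, b r = a r := fun r hr => by
    simp only [b, max_eq_left (hs.trans hr)]
  refine ⟨fun t => ∫ r in s..t, b r, fun t ht => ?_, fun t ht => ?_⟩
  · rw [← hba t ht]
    exact hb.integral_hasStrictDerivAt s t |>.hasDerivAt
  · calc (∫ r in s..t, b r) - ∫ r in s..s, b r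
        = ∫ r in Ioc s t, a r := by
          rw [integral_same, sub_zero, integral_of_le ht]
          exact setIntegral_congr_fun measurableSet_Ioc fun r hr => hba r hr.1.le
      _ ≤ ∫ r in Ici 0, a r :=
          setIntegral_mono_set haL1
            (ae_restrict_of_forall_mem measurableSet_Ici ha0)
            (LE.le.eventuallyLE fun r hr => hs.trans hr.1.le)

structure IsDampedSolution (a : ℝ → ℝ) (lam s : ℝ) (y y' : ℝ → ℝ) : Prop where
  hasDerivAt : ∀ t ∈ Ici s, HasDerivAt y (y' t) t
  hasDerivAt_deriv : ∀ t ∈ Ici s, HasDerivAt y' (lam ^ 2 * y t - a t * y' t) t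

namespace IsDampedSolution

variable {a y y' : ℝ → ℝ} {lam s : ℝ}

lemma monotoneOn_energy (h : IsDampedSolution a lam s y y') (ha : ∀ t ∈ Ici s, 0 ≤ a t) :
    MonotoneOn (fun t => lam ^ 2 * y t ^ 2 - y' t ^ 2) (Ici s) := by
  refine monotoneOn_Ici_of_hasDerivAt_nonneg (f' := fun t => 2 * a t * y' t ^ 2)
    (fun t ht => ?_) fun t ht => by have := ha t ht; positivity
  refine ((((h.hasDerivAt t ht).pow 2).const_mul (lam ^ 2)).sub
    ((h.hasDerivAt_deriv t ht).pow 2)).congr_deriv ?_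
  norm_num
  ring

lemma one_le (h : IsDampedSolution a lam s y y') (ha : ∀ t ∈ Ici s, 0 ≤ a t) (hlam : lam ≠ 0)
    (h0 : y s = 1) (h0' : y' s = 0) : ∀ t ∈ Ici s, 1 ≤ y t := by
  have hsq : ∀ t ∈ Ici s, 1 ≤ y t ^ 2 := by
    intro t ht
    have hE := h.monotoneOn_energy ha self_mem_Ici ht ht
    simp only [h0, h0'] at hE
    have : 0 < lam ^ 2 := by positivity
    nlinarith [sq_nonneg (y' t)]
  intro t ht
  by_contra! hlt
  have hneg : y t ≤ -1 := by nlinarith [hsq t ht]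
  obtain ⟨c, hc, hyc⟩ : ∃ c ∈ Icc s t, y c = 0 :=
    intermediate_value_Icc' ht (fun x hx => (h.hasDerivAt x hx.1).continuousAt.continuousWithinAt)
      ⟨by linarith, by rw [h0]; norm_num⟩
  have := hsq c hc.1
  rw [hyc] at this
  norm_num at this

lemma deriv_nonneg {A : ℝ → ℝ} (h : IsDampedSolution a lam s y y')
    (hA : ∀ t ∈ Ici s, HasDerivAt A (a t) t) (hy : ∀ t ∈ Ici s, 0 ≤ y t) (h0' : y' s = 0) :
    ∀ t ∈ Ici s, 0 ≤ y' t := by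
  have hmono : MonotoneOn (fun t => exp (A t) * y' t) (Ici s) :=
    monotoneOn_Ici_of_hasDerivAt_nonneg (f' := fun t => exp (A t) * (lam ^ 2 * y t))
      (fun t ht => ((hA t ht).exp.mul (h.hasDerivAt_deriv t ht)).congr_deriv (by ring))
      fun t ht => by have := hy t ht; positivity
  intro t ht
  have := hmono self_mem_Ici ht ht
  simp only [h0', mul_zero] at this
  exact (mul_nonneg_iff_of_pos_left (exp_pos _)).1 this

lemma mul_exp_le_add {A : ℝ → ℝ} (h : IsDampedSolution a lam s y y')
    (hA : ∀ t ∈ Ici s, HasDerivAt A (a t) t) (ha : ∀ t ∈ Ici s, 0 ≤ a t) (hlam : 0 ≤ lam)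
    (hy : ∀ t ∈ Ici s, 0 ≤ y t) (h0 : y s = 1) (h0' : y' s = 0) :
    ∀ t ∈ Ici s, lam * exp (lam * (t - s) - (A t - A s)) ≤ lam * y t + y' t := by
  have hmono : MonotoneOn (fun t => (lam * y t + y' t) * exp (A t - lam * t)) (Ici s) :=
    monotoneOn_Ici_of_hasDerivAt_nonneg (f' := fun t => exp (A t - lam * t) * (lam * a t * y t))
      (fun t ht => ((((h.hasDerivAt t ht).const_mul lam).fun_add (h.hasDerivAt_deriv t ht)).fun_mul
        ((hA t ht).fun_sub ((hasDerivAt_id' t).const_mul lam)).exp).congr_deriv (by ring))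
      fun t ht => by have := ha t ht; have := hy t ht; positivity
  intro t ht
  have key := hmono self_mem_Ici ht ht
  have hexp : exp (A s - lam * s) = exp (lam * (t - s) - (A t - A s)) * exp (A t - lam * t) := by
    rw [← exp_add]; ring_nf
  simp only [h0, h0', mul_one, add_zero, hexp, ← mul_assoc] at key
  exact le_of_mul_le_mul_right key (exp_pos _)

lemma mul_exp_neg_le_sub (h : IsDampedSolution a lam s y y') (ha : ∀ t ∈ Ici s, 0 ≤ a t)
    (hy' : ∀ t ∈ Ici s, 0 ≤ y' t) (h0 : y s = 1) (h0' : y' s = 0) :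
    ∀ t ∈ Ici s, lam * exp (-(lam * (t - s))) ≤ lam * y t - y' t := by
  have hmono : MonotoneOn (fun t => (lam * y t - y' t) * exp (lam * t)) (Ici s) :=
    monotoneOn_Ici_of_hasDerivAt_nonneg (f' := fun t => exp (lam * t) * (a t * y' t))
      (fun t ht => ((((h.hasDerivAt t ht).const_mul lam).fun_sub (h.hasDerivAt_deriv t ht)).fun_mul
        ((hasDerivAt_id' t).const_mul lam).exp).congr_deriv (by ring))
      fun t ht => by have := ha t ht; have := hy' t ht; positivity
  intro t ht
  have key := hmono self_mem_Ici ht ht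
  have hexp : exp (lam * s) = exp (-(lam * (t - s))) * exp (lam * t) := by
    rw [← exp_add]; ring_nf
  simp only [h0, h0', mul_one, sub_zero, hexp, ← mul_assoc] at key
  exact le_of_mul_le_mul_right key (exp_pos _)

lemma le_cosh (h : IsDampedSolution a lam s y y') (ha : ∀ t ∈ Ici s, 0 ≤ a t)
    (hy' : ∀ t ∈ Ici s, 0 ≤ y' t) (h0 : y s = 1) (h0' : y' s = 0) :
    ∀ t ∈ Ici s, y t ≤ cosh (lam * (t - s)) := by
  have hx : ∀ t, HasDerivAt (fun t => lam * (t - s)) lam t := fun t => by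
    simpa using ((hasDerivAt_id' t).sub_const s).const_mul lam
  have hW : MonotoneOn
      (fun t => lam * y t * sinh (lam * (t - s)) - y' t * cosh (lam * (t - s))) (Ici s) :=
    monotoneOn_Ici_of_hasDerivAt_nonneg (f' := fun t => a t * y' t * cosh (lam * (t - s)))
      (fun t ht => ((((h.hasDerivAt t ht).const_mul lam).fun_mul (hx t).sinh).fun_sub
        ((h.hasDerivAt_deriv t ht).fun_mul (hx t).cosh)).congr_deriv (by ring))
      fun t ht => by have := ha t ht; have := hy' t ht; positivity
  have hW0 : ∀ t ∈ Ici s, 0 ≤ lam * y t * sinh (lam * (t - s)) - y' t * cosh (lam * (t - s)) :=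
    fun t ht => by simpa [h0'] using hW self_mem_Ici ht ht
  have hR : AntitoneOn (fun t => y t / cosh (lam * (t - s))) (Ici s) :=
    antitoneOn_Ici_of_hasDerivAt_nonpos
      (f' := fun t => -(lam * y t * sinh (lam * (t - s)) - y' t * cosh (lam * (t - s))) /
        cosh (lam * (t - s)) ^ 2)
      (fun t ht => ((h.hasDerivAt t ht).div (hx t).cosh (cosh_pos _).ne').congr_deriv (by ring))
      fun t ht => div_nonpos_of_nonpos_of_nonneg (neg_nonpos.2 (hW0 t ht)) (sq_nonneg _)
  intro t ht
  have key := hR self_mem_Ici ht ht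
  simp only [h0, sub_self, mul_zero, cosh_zero, div_one] at key
  exact (div_le_one (cosh_pos _)).1 key

lemma exp_neg_mul_cosh_le {A : ℝ → ℝ} {M : ℝ} (h : IsDampedSolution a lam s y y')
    (hA : ∀ t ∈ Ici s, HasDerivAt A (a t) t) (hAM : ∀ t ∈ Ici s, A t - A s ≤ M)
    (ha : ∀ t ∈ Ici s, 0 ≤ a t) (hlam : 0 < lam) (hy : ∀ t ∈ Ici s, 0 ≤ y t)
    (hy' : ∀ t ∈ Ici s, 0 ≤ y' t) (h0 : y s = 1) (h0' : y' s = 0) :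
    ∀ t ∈ Ici s, exp (-M) * cosh (lam * (t - s)) ≤ y t := by
  intro t ht
  have hplus := h.mul_exp_le_add hA ha hlam.le hy h0 h0' t ht
  have hminus := h.mul_exp_neg_le_sub ha hy' h0 h0' t ht
  have hM : 0 ≤ M := by simpa using hAM s self_mem_Ici
  set x := lam * (t - s)
  have h1 : exp (-M) * exp x ≤ exp (x - (A t - A s)) := by
    rw [← exp_add]
    exact exp_le_exp.2 (by linarith [hAM t ht])
  have h2 : exp (-M) * exp (-x) ≤ exp (-x) :=
    mul_le_of_le_one_left (exp_pos _).le (exp_le_one_iff.2 (by linarith))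
  have hsum : lam * (exp (-M) * (exp x + exp (-x))) ≤ lam * (2 * y t) := by
    nlinarith [mul_le_mul_of_nonneg_left h1 hlam.le, mul_le_mul_of_nonneg_left h2 hlam.le]
  rw [cosh_eq]
  linarith [le_of_mul_le_mul_left hsum hlam]

end IsDampedSolution

theorem y1_two_sided_bound_general (a : ℝ → ℝ) (ha : ContinuousOn a (Ici 0))
    (ha0 : ∀ t ∈ Ici (0:ℝ), 0 ≤ a t)
    (haL1 : IntegrableOn a (Ici 0))
    (M : ℝ) (hM : M = ∫ t in Ici (0:ℝ), a t)
    (lam : ℝ) (hlam : 0 < lam) (s : ℝ) (hs : 0 ≤ s)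
    (y1 y1d y1dd : ℝ → ℝ)
    (hy1 : ∀ t ∈ Ici s, HasDerivAt y1 (y1d t) t)
    (hy1d : ∀ t ∈ Ici s, HasDerivAt y1d (y1dd t) t)
    (hode : ∀ t ∈ Ici s, y1dd t + a t * y1d t - lam ^ 2 * y1 t = 0)
    (hinit : y1 s = 1) (hinit' : y1d s = 0) :
    ∀ t ∈ Ici s, Real.exp (-M) * Real.cosh (lam * (t - s)) ≤ y1 t ∧
      y1 t ≤ Real.cosh (lam * (t - s)) := by
  have h : IsDampedSolution a lam s y1 y1d :=
    ⟨hy1, fun t ht => (hy1d t ht).congr_deriv (by linarith [hode t ht])⟩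
  have ha_s : ∀ t ∈ Ici s, 0 ≤ a t := fun t ht => ha0 t (hs.trans ht)
  obtain ⟨A, hA, hAM⟩ := exists_primitive_sub_le_integral ha ha0 haL1 hs
  have hy : ∀ t ∈ Ici s, 0 ≤ y1 t := fun t ht =>
    zero_le_one.trans (h.one_le ha_s hlam.ne' hinit hinit' t ht)
  have hy' := h.deriv_nonneg hA hy hinit'
  exact fun t ht => ⟨h.exp_neg_mul_cosh_le hA (hM ▸ hAM) ha_s hlam hy hy' hinit hinit' t ht,
    h.le_cosh ha_s hy' hinit hinit' t ht⟩

theorem y1_two_sided_bound (a : ℝ → ℝ) (ha : ContinuousOn a (Ici 0))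
    (ha0 : ∀ t ∈ Ici (0:ℝ), 0 ≤ a t)
    (haL1 : IntegrableOn a (Ici 0))
    (M : ℝ) (hM : M = ∫ t in Ici (0:ℝ), a t)
    (lam : ℝ) (hlam : 0 < lam) (s : ℝ) (hs : 0 ≤ s)
    (y1 y1d y1dd : ℝ → ℝ)
    (hy1 : ∀ t ∈ Ici s, HasDerivAt y1 (y1d t) t)
    (hy1d : ∀ t ∈ Ici s, HasDerivAt y1d (y1dd t) t)
    (hy1dd : ContinuousOn y1dd (Ici s))
    (hode : ∀ t ∈ Ici s, y1dd t + a t * y1d t - lam ^ 2 * y1 t = 0)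
    (hinit : y1 s = 1) (hinit' : y1d s = 0) :
    ∀ t ∈ Ici s, Real.exp (-M) * Real.cosh (lam * (t - s)) ≤ y1 t ∧
      y1 t ≤ Real.cosh (lam * (t - s)) :=
  y1_two_sided_bound_general a ha ha0 haL1 M hM lam hlam s hs y1 y1d y1dd hy1 hy1d hode hinit hinit'
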